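/- Let R be a commutative ℚ-algebra and let a : ℕ → R be a sequence with a_0 = 1 and exponential generating function f(t) = Σ_{n≥0} a_n t^n/n! ∈ R[[t]]. Regard f as a power series over the polynomial ring R[x] and define f(t)^x := exp( x · log f(t) ), where log f = Σ_{i≥1} (−1)^{i+1} (f−1)^i / i (well defined since f−1 has zero constant term) and exp is the formal exponential. Then for every k ≥ 0, the coefficient satisfies k! · [t^k]( f(t)^x ) = Σ_{i=0}^k (x)_i · B_{k,i}, as an identity in R[x], where (x)_i is the falling factorial and B_{k,i} are the partial Bell polynomials of the sequence a. In particular, for every nonnegative integer n, k!·[t^k](f(t)^n) = Σ_{i=0}^k (n)_i B_{k,i}. -/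

import Mathlib

open Finset Polynomial

/-- Exponential generating function of a sequence. -/
noncomputable def egf {R : Type*} [CommRing R] [Algebra ℚ R] (a : ℕ → R) : PowerSeries R :=
  PowerSeries.mk fun n => ((n.factorial : ℚ)⁻¹) • a n

/-- Formal composition of power series (the correct composition when the inner
series `h` has zero constant term, since then `h ^ n` has order at least `n`). -/
noncomputable def psComp {R : Type*} [CommRing R] (g h : PowerSeries R) : PowerSeries R :=
  PowerSeries.mk fun m =>
    ∑ n ∈ Finset.range (m + 1), (PowerSeries.coeff n g) * (PowerSeries.coeff m (h ^ n))

/-- Partial Bell polynomials of a sequence `a` (with `a 0 = 1`):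
`B_{n,k} = (n!/k!) · [t^n] (f(t) - 1)^k` where `f` is the e.g.f. of `a`. -/
noncomputable def bellPartial {R : Type*} [CommRing R] [Algebra ℚ R] (a : ℕ → R) (n k : ℕ) : R :=
  ((n.factorial : ℚ) / (k.factorial : ℚ)) • (PowerSeries.coeff n ((egf a - 1) ^ k))

/-- Stirling numbers of the second kind. -/
def stirling2 : ℕ → ℕ → ℕ
  | 0, 0 => 1
  | 0, _ + 1 => 0
  | _ + 1, 0 => 0
  | n + 1, k + 1 => (k + 1) * stirling2 n (k + 1) + stirling2 n k

/-- Bell numbers. -/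
def bellNum (n : ℕ) : ℕ := ∑ k ∈ Finset.range (n + 1), stirling2 n k

/-- Signed Stirling numbers of the first kind, defined as the coefficients of the
falling factorial `x (x-1) ⋯ (x-n+1) = Σ_k s(n,k) x^k`. -/
noncomputable def stirling1 (n k : ℕ) : ℚ := (descPochhammer ℚ n).coeff k

/-!
By the chain rule and `(1 + t) · log'(1 + t) = 1`, the series `F = exp (x · log (1 + t))`
satisfies `(1 + t) F' = x F` with `F(0) = 1`; comparing coefficients gives
`(i + 1) Fᵢ₊₁ = (x - i) Fᵢ`, hence `i! Fᵢ = (x)ᵢ`. Since `psComp` agrees with substitution when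
the inner series has zero constant term, `f(t)^x` is `F` substituted into `f - 1`, and
substituting any `G` into `f - 1` gives `k! [t^k] G(f - 1) = Σᵢ i! Gᵢ B_{k,i}`. The integer case
is the same with `G = (1 + t)^n`, where `i! Gᵢ = (n)ᵢ`.
-/

open PowerSeries

theorem PowerSeries.coeff_pow_eq_zero_of_lt {S : Type*} [Semiring S] {h : S⟦X⟧}
    (hh : constantCoeff h = 0) {k n : ℕ} (hkn : k < n) : coeff k (h ^ n) = 0 :=
  coeff_of_lt_order k <| lt_of_lt_of_le (by exact_mod_cast hkn)
    (le_order_pow_of_constantCoeff_eq_zero n hh)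

section Substitution

variable {R S : Type*} [CommRing R] [CommRing S] [Algebra R S]

theorem PowerSeries.coeff_subst_eq_sum_range {h : S⟦X⟧} (hh : constantCoeff h = 0)
    (g : R⟦X⟧) (k : ℕ) :
    coeff k (g.subst h) = ∑ n ∈ range (k + 1), coeff n g • coeff k (h ^ n) := by
  rw [coeff_subst' (HasSubst.of_constantCoeff_zero' hh)]
  refine finsum_eq_sum_of_support_subset _ fun n hn => ?_
  rw [coe_range, Set.mem_Iio, Nat.lt_succ_iff]
  by_contra! hkn
  exact hn (by simp only [coeff_pow_eq_zero_of_lt hh hkn, smul_zero])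

theorem psComp_eq_subst {g h : S⟦X⟧} (hh : constantCoeff h = 0) : psComp g h = g.subst h := by
  ext k
  simp [psComp, coeff_subst_eq_sum_range hh]

end Substitution

theorem PowerSeries.factorial_mul_coeff_one_add_X_pow {A : Type*} [Semiring A] (n i : ℕ) :
    (i.factorial : A) * coeff i ((1 + X : A⟦X⟧) ^ n) = n.descFactorial i := by
  have hcoe : (1 + X : A⟦X⟧) ^ n = (((1 + Polynomial.X) ^ n : A[X]) : A⟦X⟧) := by simp
  rw [hcoe, Polynomial.coeff_coe, Polynomial.coeff_one_add_X_pow,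
    Nat.descFactorial_eq_factorial_mul_choose, Nat.cast_mul]

section BinomialSeries

variable {A : Type*} [CommRing A]

theorem PowerSeries.factorial_mul_coeff_of_one_add_X_mul_derivative {c : A} {F : A⟦X⟧}
    (hF : (1 + X) * d⁄dX A F = C c * F) (i : ℕ) :
    (i.factorial : A) * coeff i F = (descPochhammer A i).eval c * constantCoeff F := by
  have hrec : ∀ i : ℕ, ((i : A) + 1) * coeff (i + 1) F = (c - i) * coeff i F := by
    intro i
    have := congrArg (coeff i) hF
    rw [add_mul, one_mul, map_add, coeff_C_mul, coeff_derivative] at this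
    cases i with
    | zero => simpa using this
    | succ j =>
      rw [coeff_succ_X_mul, coeff_derivative] at this
      push_cast at this ⊢
      linear_combination this
  induction i with
  | zero => simp
  | succ i ih =>
    rw [Nat.factorial_succ, Nat.cast_mul, Nat.cast_succ, mul_comm ((i : A) + 1), mul_assoc, hrec,
      mul_left_comm, ih, descPochhammer_succ_eval]
    ring

theorem PowerSeries.subst_one_add_X_pow {h : A⟦X⟧} (hh : HasSubst h) (n : ℕ) :
    ((1 + X : A⟦X⟧) ^ n).subst h = (1 + h) ^ n := by
  rw [← coe_substAlgHom hh, map_pow, map_add, map_one, coe_substAlgHom, subst_X hh]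

variable [Algebra ℚ A]

theorem PowerSeries.one_add_X_mul_derivative_log : (1 + X) * d⁄dX A (log A) = 1 := by
  ext n
  rw [deriv_log, add_mul, one_mul, map_add, coeff_mk, coeff_one]
  cases n with
  | zero => simp
  | succ n => simp [coeff_succ_X_mul, pow_succ]

theorem PowerSeries.factorial_mul_coeff_exp_subst_mul_log (c : A) (i : ℕ) :
    (i.factorial : A) * coeff i ((exp A).subst (C c * log A)) = (descPochhammer A i).eval c := by
  have hg : constantCoeff (C c * log A) = 0 := by simp
  have hF : (1 + X) * d⁄dX A ((exp A).subst (C c * log A)) =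
      C c * (exp A).subst (C c * log A) := by
    rw [derivative_subst (HasSubst.of_constantCoeff_zero' hg), derivative_exp,
      Derivation.leibniz, derivative_C, smul_zero, add_zero, smul_eq_mul]
    linear_combination
      (C c * (exp A).subst (C c * log A)) * one_add_X_mul_derivative_log (A := A)
  have h0 : constantCoeff ((exp A).subst (C c * log A)) = 1 := by
    rw [← coeff_zero_eq_constantCoeff_apply, coeff_subst_eq_sum_range hg]
    simp
  rw [factorial_mul_coeff_of_one_add_X_mul_derivative hF, h0, mul_one]

theorem psComp_exp_mul_psComp_log {u : A⟦X⟧} (hu : constantCoeff u = 0) (c : A) :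
    psComp (exp A) (PowerSeries.C c * psComp (log A) u) =
      subst u ((exp A).subst (PowerSeries.C c * log A)) := by
  have hg : constantCoeff (PowerSeries.C c * log A) = 0 := by simp
  have hinner : PowerSeries.C c * psComp (log A) u = subst u (PowerSeries.C c * log A) := by
    rw [psComp_eq_subst hu, subst_mul (HasSubst.of_constantCoeff_zero' hu), subst_C]
    rfl
  rw [hinner, psComp_eq_subst (constantCoeff_subst_eq_zero hu _ hg),
    subst_comp_subst_apply (HasSubst.of_constantCoeff_zero' hg)
      (HasSubst.of_constantCoeff_zero' hu)]

end BinomialSeries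

theorem descPochhammer_eval_X {R : Type*} [CommRing R] (n : ℕ) :
    (descPochhammer R[X] n).eval Polynomial.X = descPochhammer R n := by
  rw [← descPochhammer_map Polynomial.C, eval_map, eval₂_C_X]

section Bell

variable {A B : Type*} [CommRing A] [Algebra ℚ A] [CommRing B] [Algebra ℚ B]

theorem coeff_egf (a : ℕ → A) (n : ℕ) :
    coeff n (egf a) = ((n.factorial : ℚ)⁻¹) • a n :=
  coeff_mk _ _

theorem constantCoeff_egf_sub_one {a : ℕ → A} (ha0 : a 0 = 1) :
    PowerSeries.constantCoeff (egf a - 1) = 0 := by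
  rw [← coeff_zero_eq_constantCoeff_apply, map_sub, coeff_egf, ha0]
  simp

theorem map_egf (f : A →+* B) (a : ℕ → A) : map f (egf a) = egf (f ∘ a) := by
  ext n
  rw [PowerSeries.coeff_map, coeff_egf, coeff_egf, map_rat_smul, Function.comp_apply]

theorem map_bellPartial (f : A →+* B) (a : ℕ → A) (n k : ℕ) :
    f (bellPartial a n k) = bellPartial (f ∘ a) n k := by
  rw [bellPartial, bellPartial, map_rat_smul, ← PowerSeries.coeff_map, map_pow, map_sub, map_one,
    map_egf]

theorem factorial_mul_coeff_subst_egf_sub_one {a : ℕ → A} (ha0 : a 0 = 1) (G : A⟦X⟧)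
    (k : ℕ) :
    (k.factorial : A) * coeff k (G.subst (egf a - 1)) =
      ∑ i ∈ range (k + 1), (i.factorial : A) * coeff i G * bellPartial a k i := by
  rw [coeff_subst_eq_sum_range (constantCoeff_egf_sub_one ha0), mul_sum]
  refine sum_congr rfl fun i _ => ?_
  have hfac : (k.factorial : A) =
      (i.factorial : A) * algebraMap ℚ A (k.factorial / i.factorial) := by
    rw [← map_natCast (algebraMap ℚ A), ← map_natCast (algebraMap ℚ A), ← map_mul,
      mul_div_cancel₀ _ (by positivity)]
  rw [bellPartial, smul_eq_mul, Algebra.smul_def, hfac]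
  ring

end Bell

/-- The formal power `f(t)^x = exp(x log f(t))` has coefficients
`k! [t^k] f(t)^x = Σ_i (x)_i B_{k,i}` in `R[x]`; in particular for a natural number
`n`, `k! [t^k] f(t)^n = Σ_i (n)_i B_{k,i}` in `R`. -/
theorem pow_x_coeff (R : Type*) [CommRing R] [Algebra ℚ R]
    (a : ℕ → R) (ha0 : a 0 = 1)
    (fX : PowerSeries (Polynomial R))
    (hfX : fX = PowerSeries.map (Polynomial.C : R →+* Polynomial R) (egf a))
    (L : PowerSeries (Polynomial R))
    (hL : L = PowerSeries.mk fun i =>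
      if i = 0 then 0 else (((-1 : ℚ) ^ (i + 1) / (i : ℚ)) • (1 : Polynomial R)))
    (fpowx : PowerSeries (Polynomial R))
    (hfpowx : fpowx = psComp (PowerSeries.exp (Polynomial R))
      (PowerSeries.C Polynomial.X * psComp L (fX - 1))) :
    (∀ k : ℕ,
      (k.factorial : Polynomial R) * PowerSeries.coeff k fpowx =
        ∑ i ∈ Finset.range (k + 1), descPochhammer R i * Polynomial.C (bellPartial a k i)) ∧
    (∀ n k : ℕ,
      (k.factorial : R) * PowerSeries.coeff k ((egf a) ^ n) =
        ∑ i ∈ Finset.range (k + 1), (n.descFactorial i : R) * bellPartial a k i) := by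
  refine ⟨fun k => ?_, fun n k => ?_⟩
  · have ha0' : (Polynomial.C ∘ a) 0 = 1 := by simp [ha0]
    have hLlog : L = log R[X] := by
      rw [hL]
      ext i
      rw [coeff_mk, coeff_log, Algebra.algebraMap_eq_smul_one]
    rw [hfpowx, hfX, map_egf, hLlog, psComp_exp_mul_psComp_log (constantCoeff_egf_sub_one ha0'),
      factorial_mul_coeff_subst_egf_sub_one ha0']
    refine sum_congr rfl fun i _ => ?_
    rw [factorial_mul_coeff_exp_subst_mul_log, descPochhammer_eval_X, ← map_bellPartial]
  · have hpow : egf a ^ n = ((1 + PowerSeries.X : R⟦X⟧) ^ n).subst (egf a - 1) := by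
      rw [subst_one_add_X_pow (HasSubst.of_constantCoeff_zero' (constantCoeff_egf_sub_one ha0)),
        add_sub_cancel]
    rw [hpow, factorial_mul_coeff_subst_egf_sub_one ha0]
    simp_rw [factorial_mul_coeff_one_add_X_pow]
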